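/- arXiv:1305.7164 — 2 statements merged into one kernel-verified Lean document; each statement's English description precedes it below -/
import Mathlib

section
/- Q̂ is semiconjugate to the doubling map via the extended exponential: Q̂(Exp̂(x, y, t)) = Exp̂(2x, 2y, 2t) for all (x, y, t) ∈ ℝ³. -/
/-- The extended exponential map on the upper half-space model. -/
noncomputable def ExpHat (p : ℝ × ℝ × ℝ) : ℝ × ℝ × ℝ :=
  (2 * Real.exp p.2.2 * Real.cos p.2.1 / (1 + Real.exp (2 * p.2.2)) * Real.exp p.1,
   2 * Real.exp p.2.2 * Real.sin p.2.1 / (1 + Real.exp (2 * p.2.2)) * Real.exp p.1,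
   (Real.exp (2 * p.2.2) - 1) / (1 + Real.exp (2 * p.2.2)) * Real.exp p.1)

/-- The Euclidean norm on `ℝ × ℝ × ℝ`. -/
noncomputable def enorm3 (p : ℝ × ℝ × ℝ) : ℝ :=
  Real.sqrt (p.1 ^ 2 + p.2.1 ^ 2 + p.2.2 ^ 2)

/-- The Poincaré extension of the squaring map to the upper half-space. -/
noncomputable def QHat (p : ℝ × ℝ × ℝ) : ℝ × ℝ × ℝ :=
  ((p.1 ^ 2 + p.2.1 ^ 2 + p.2.2 ^ 2) * (p.1 ^ 2 - p.2.1 ^ 2) /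
      ((p.1 ^ 2 + p.2.1 ^ 2 + p.2.2 ^ 2) + p.2.2 ^ 2),
   (p.1 ^ 2 + p.2.1 ^ 2 + p.2.2 ^ 2) * (2 * p.1 * p.2.1) /
      ((p.1 ^ 2 + p.2.1 ^ 2 + p.2.2 ^ 2) + p.2.2 ^ 2),
   (p.1 ^ 2 + p.2.1 ^ 2 + p.2.2 ^ 2) *
      (2 * p.2.2 * Real.sqrt (p.1 ^ 2 + p.2.1 ^ 2 + p.2.2 ^ 2)) /
      ((p.1 ^ 2 + p.2.1 ^ 2 + p.2.2 ^ 2) + p.2.2 ^ 2))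

/-!
`ExpHat (x, y, t) = eˣ • sphereParam y t`, where `sphereParam y t` lies on the unit sphere, and
`QHat` is homogeneous of degree two.  So it suffices that `QHat` maps `sphereParam y t` to
`sphereParam (2y) (2t)`. On the unit sphere `QHat` is `(a, b, c) ↦ (a² - b², 2ab, 2c) / (1 + c²)`,
which reduces this to the double-angle formulas for `cos`, `sin`, `cosh` and `sinh`.
-/

noncomputable def sphereParam (y t : ℝ) : ℝ × ℝ × ℝ :=
  (Real.cos y / Real.cosh t, Real.sin y / Real.cosh t, Real.tanh t)

lemma sphereParam_normSq (y t : ℝ) :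
    (sphereParam y t).1 ^ 2 + (sphereParam y t).2.1 ^ 2 + (sphereParam y t).2.2 ^ 2 = 1 := by
  have hc := (Real.cosh_pos t).ne'
  simp only [sphereParam, Real.tanh_eq_sinh_div_cosh]
  field_simp
  linear_combination Real.sin_sq_add_cos_sq y - Real.cosh_sq' t

lemma expHat_eq_smul_sphereParam (x y t : ℝ) :
    ExpHat (x, y, t) = Real.exp x • sphereParam y t := by
  have hE : Real.exp (2 * t) = Real.exp t * Real.exp t := by rw [two_mul, Real.exp_add]
  have hsech : 2 * Real.exp t / (1 + Real.exp (2 * t)) = 1 / Real.cosh t := by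
    rw [Real.cosh_eq, Real.exp_neg, hE]
    field_simp
    ring
  have htanh : (Real.exp (2 * t) - 1) / (1 + Real.exp (2 * t)) = Real.tanh t := by
    rw [Real.tanh_eq_sinh_div_cosh, Real.cosh_eq, Real.sinh_eq, Real.exp_neg, hE]
    field_simp
    ring
  simp only [ExpHat, sphereParam, Prod.smul_mk, smul_eq_mul, mul_div_right_comm _ (Real.cos y),
    mul_div_right_comm _ (Real.sin y), hsech, htanh]
  ext <;> simp only <;> ring

lemma QHat_smul {r : ℝ} (hr : 0 ≤ r) (p : ℝ × ℝ × ℝ) : QHat (r • p) = r ^ 2 • QHat p := by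
  obtain ⟨a, b, c⟩ := p
  have hsqrt : Real.sqrt ((r * a) ^ 2 + (r * b) ^ 2 + (r * c) ^ 2)
      = r * Real.sqrt (a ^ 2 + b ^ 2 + c ^ 2) := by
    rw [show (r * a) ^ 2 + (r * b) ^ 2 + (r * c) ^ 2 = r ^ 2 * (a ^ 2 + b ^ 2 + c ^ 2) by ring,
      Real.sqrt_mul (sq_nonneg r), Real.sqrt_sq hr]
  have hden : (r * a) ^ 2 + (r * b) ^ 2 + (r * c) ^ 2 + (r * c) ^ 2
      = r ^ 2 * (a ^ 2 + b ^ 2 + c ^ 2 + c ^ 2) := by ring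
  simp only [QHat, Prod.smul_mk, smul_eq_mul, hsqrt, hden]
  rcases eq_or_ne r 0 with rfl | hr0
  · simp
  rcases eq_or_ne (a ^ 2 + b ^ 2 + c ^ 2 + c ^ 2) 0 with hD | hD
  · simp [hD]
  ext <;> field_simp

lemma QHat_of_normSq_eq_one {a b c : ℝ} (h : a ^ 2 + b ^ 2 + c ^ 2 = 1) :
    QHat (a, b, c) = ((a ^ 2 - b ^ 2) / (1 + c ^ 2), 2 * a * b / (1 + c ^ 2),
      2 * c / (1 + c ^ 2)) := by
  simp only [QHat, h, Real.sqrt_one, one_mul, mul_one]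

lemma QHat_sphereParam (y t : ℝ) : QHat (sphereParam y t) = sphereParam (2 * y) (2 * t) := by
  rw [QHat_of_normSq_eq_one (sphereParam_normSq y t)]
  have hc := (Real.cosh_pos t).ne'
  have hc2 : Real.cosh t ^ 2 + Real.sinh t ^ 2 ≠ 0 := by positivity
  simp only [sphereParam, Real.cos_two_mul', Real.sin_two_mul, Real.tanh_eq_sinh_div_cosh,
    Real.sinh_two_mul, Real.cosh_two_mul]
  ext <;> field_simp

/-- `QHat` is semiconjugate to the doubling map via the extended exponential. -/
theorem qHat_semiconj (x y t : ℝ) :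
    QHat (ExpHat (x, y, t)) = ExpHat (2 * x, 2 * y, 2 * t) := by
  have hexp : Real.exp x ^ 2 = Real.exp (2 * x) := by rw [sq, ← Real.exp_add, two_mul]
  rw [expHat_eq_smul_sphereParam, QHat_smul (Real.exp_pos x).le, QHat_sphereParam, hexp,
    expHat_eq_smul_sphereParam]
end

section
/- Every sphere centered at the origin is invariant in the following sense under Q̂: Q̂ maps the sphere of radius r > 0 (intersected with the upper half-space) into the sphere of radius r². Consequently the family of hemispheres centered at the origin is a Q̂-invariant foliation of the upper half-space minus the origin, with the unit hemisphere mapped to itself. -/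
theorem QHat_normSq (p : ℝ × ℝ × ℝ) :
    (QHat p).1 ^ 2 + (QHat p).2.1 ^ 2 + (QHat p).2.2 ^ 2 =
      (p.1 ^ 2 + p.2.1 ^ 2 + p.2.2 ^ 2) ^ 2 := by
  obtain ⟨x, y, t⟩ := p
  set s := x ^ 2 + y ^ 2 + t ^ 2 with hs_def
  have hs : 0 ≤ s := by positivity
  rcases (add_nonneg hs (sq_nonneg t)).eq_or_lt with hd | hd
  · have hs0 : s = 0 := by nlinarith [sq_nonneg t]
    simp [QHat, ← hs_def, hs0]
  · have hsqrt : Real.sqrt s ^ 2 = s := Real.sq_sqrt hs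
    simp only [QHat, ← hs_def]
    field_simp
    -- `(x² - y²)² + (2xy)² = (x² + y²)² = (s - t²)²`, and `(s - t²)² + 4t²s = (s + t²)²`.
    linear_combination
      (4 * s ^ 2 * t ^ 2) * hsqrt + (s ^ 2 * (x ^ 2 + y ^ 2 + s - t ^ 2)) * hs_def

theorem enorm3_QHat (p : ℝ × ℝ × ℝ) : enorm3 (QHat p) = enorm3 p ^ 2 := by
  rw [enorm3, QHat_normSq, Real.sqrt_sq (by positivity), enorm3, Real.sq_sqrt (by positivity)]

theorem QHat_snd_snd_nonneg {p : ℝ × ℝ × ℝ} (ht : 0 ≤ p.2.2) : 0 ≤ (QHat p).2.2 := by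
  simp only [QHat]
  positivity

theorem qHat_spheres_general (r : ℝ) (p : ℝ × ℝ × ℝ)
    (hp : enorm3 p = r) (ht : 0 ≤ p.2.2) :
    enorm3 (QHat p) = r ^ 2 ∧ 0 ≤ (QHat p).2.2 :=
  ⟨by rw [enorm3_QHat, hp], QHat_snd_snd_nonneg ht⟩

/-- `QHat` maps the upper hemisphere of radius `r` into the sphere of radius
`r²`, preserving the upper half-space; in particular the unit hemisphere is
mapped to itself. -/
theorem qHat_spheres (r : ℝ) (hr : 0 < r) (p : ℝ × ℝ × ℝ)
    (hp : enorm3 p = r) (ht : 0 ≤ p.2.2) :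
    enorm3 (QHat p) = r ^ 2 ∧ 0 ≤ (QHat p).2.2 :=
  qHat_spheres_general r p hp ht
end
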